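/- arXiv:2605.13269 — 3 statements merged into one kernel-verified Lean document; each statement's English description precedes it below -/
import Mathlib

section
/- For any two elements e = (i,a) and e' = (u,v) of Ω lying in distinct blocks (u ≠ i), and any x ∈ ℝ^Ω, the mixed second partial derivative of the partition multilinear extension satisfies ∂²f̃/∂x_{e'}∂x_e(x) = Σ_{A ∈ I^{-{i,u}}} (∏_{j ∈ N, j ∉ {i,u}} p_j(A; x)) · [ (F(A ∪ {e',e}) − F(A ∪ {e'})) − (F(A ∪ {e}) − F(A)) ], where I^{-{i,u}} = {A ∈ I : A ∩ Ω_i = ∅ and A ∩ Ω_u = ∅}. Moreover, if F is submodular then for every x in the partition matroid polytope P this mixed second partial derivative is ≤ 0. -/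
open Finset
open scoped Classical

/-- Feasibility in the partition matroid: at most one element per block. -/
def feasible {N Ω : Type*} [Fintype N] [Fintype Ω] (blk : Ω → N) (A : Finset Ω) : Prop :=
  ∀ i : N, (A.filter (fun e => blk e = i)).card ≤ 1

/-- Per-agent probability factor `p_i(A; x)`. -/
noncomputable def blockProb {N Ω : Type*} [Fintype N] [Fintype Ω] (blk : Ω → N) (x : Ω → ℝ)
    (A : Finset Ω) (i : N) : ℝ :=
  if A.filter (fun e => blk e = i) = ∅ then
    1 - ∑ e ∈ Finset.univ.filter (fun e => blk e = i), x e
  else ∑ e ∈ A.filter (fun e => blk e = i), x e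

/-- The partition multilinear extension. -/
noncomputable def pme {N Ω : Type*} [Fintype N] [Fintype Ω] (blk : Ω → N) (F : Finset Ω → ℝ)
    (x : Ω → ℝ) : ℝ :=
  ∑ A ∈ Finset.univ.filter (fun A => feasible blk A), F A * ∏ i : N, blockProb blk x A i

/-- Partial derivative of `f` in coordinate `e` at `x`. -/
noncomputable def pderiv {Ω : Type*} (f : (Ω → ℝ) → ℝ) (e : Ω) (x : Ω → ℝ) : ℝ :=
  deriv (fun t : ℝ => f (Function.update x e t)) (x e)

/-- Membership in the partition matroid polytope `P`. -/
def memPolytope {N Ω : Type*} [Fintype N] [Fintype Ω] (blk : Ω → N) (x : Ω → ℝ) : Prop :=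
  (∀ e, 0 ≤ x e ∧ x e ≤ 1) ∧
    ∀ i : N, ∑ e ∈ Finset.univ.filter (fun e => blk e = i), x e ≤ 1

/-- Membership in the categorical face `𝓕` of the partition matroid polytope. -/
def memFace {N Ω : Type*} [Fintype N] [Fintype Ω] (blk : Ω → N) (x : Ω → ℝ) : Prop :=
  (∀ e, 0 ≤ x e ∧ x e ≤ 1) ∧
    ∀ i : N, ∑ e ∈ Finset.univ.filter (fun e => blk e = i), x e = 1

/-- Submodularity of a set function. -/
def Submodular {Ω : Type*} [Fintype Ω] (F : Finset Ω → ℝ) : Prop :=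
  ∀ A B : Finset Ω, A ⊆ B → ∀ e ∉ B, F (insert e B) - F B ≤ F (insert e A) - F A

/-!
In the coordinate `x_{e'}` every factor `p_j(A; x)` is constant except `p_{blk e'}`, which is
affine with slope `+1` if `e' ∈ A`, `-1` if `A` misses the block of `e'`, and `0` otherwise.
Pairing each `A ∋ e'` with `A \ {e'}` therefore turns `∂/∂x_{e'}` of a sum
`∑_A c(A) ∏_j p_j(A; x)` into `∑ (c(A ∪ {e'}) - c(A)) ∏_{j ≠ blk e'} p_j(A; x)` over the sets `A`
missing the block of `e'`. Applying this once for `e` and once for `e'` gives the formula, and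
submodularity makes each bracket nonpositive while the `p_j` are nonnegative on the polytope.
-/

section PartitionMultilinearExtension

variable {N Ω : Type*} {blk : Ω → N}

lemma notMem_of_filter_eq_empty {A : Finset Ω} {e' : Ω}
    (hA : A.filter (fun a => blk a = blk e') = ∅) : e' ∉ A :=
  fun h => Finset.filter_eq_empty_iff.1 hA h rfl

lemma filter_insert_eq_empty {A : Finset Ω} {a : Ω} {k : N} (hak : blk a ≠ k)
    (hA : A.filter (fun b => blk b = k) = ∅) : (insert a A).filter (fun b => blk b = k) = ∅ := by
  rw [Finset.filter_insert, if_neg hak, hA]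

lemma filter_erase_eq_empty {A : Finset Ω} (a : Ω) {k : N}
    (hA : A.filter (fun b => blk b = k) = ∅) : (A.erase a).filter (fun b => blk b = k) = ∅ := by
  rw [Finset.filter_erase, hA, Finset.erase_empty]

lemma sum_update_eq_add_sub {s : Finset Ω} {e' : Ω} (h : e' ∈ s) (x : Ω → ℝ) (t : ℝ) :
    ∑ a ∈ s, Function.update x e' t a = ∑ a ∈ s, x a + (t - x e') := by
  rw [Finset.sum_update_of_mem h, Finset.sdiff_singleton_eq_erase, ← Finset.add_sum_erase s x h]
  ring

variable [Fintype N] [Fintype Ω]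

lemma feasible.insert {A : Finset Ω} {a : Ω} (hA : feasible blk A)
    (ha : A.filter (fun b => blk b = blk a) = ∅) : feasible blk (insert a A) := by
  intro j
  by_cases hj : blk a = j
  · subst hj
    simp [Finset.filter_insert, ha]
  · rw [Finset.filter_insert, if_neg hj]
    exact hA j

lemma feasible.erase {A : Finset Ω} (hA : feasible blk A) (a : Ω) : feasible blk (A.erase a) :=
  fun j => (Finset.card_le_card (Finset.filter_subset_filter _ (Finset.erase_subset a A))).trans
    (hA j)

lemma feasible.filter_eq_singleton {A : Finset Ω} {e' : Ω} (hA : feasible blk A) (he' : e' ∈ A) :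
    A.filter (fun a => blk a = blk e') = {e'} := by
  have hmem : e' ∈ A.filter (fun a => blk a = blk e') := Finset.mem_filter.2 ⟨he', rfl⟩
  exact Finset.eq_singleton_iff_unique_mem.2
    ⟨hmem, fun b hb => Finset.card_le_one.1 (hA (blk e')) b hb e' hmem⟩

lemma feasible.filter_erase_eq_empty {A : Finset Ω} {e' : Ω} (hA : feasible blk A)
    (he' : e' ∈ A) : (A.erase e').filter (fun a => blk a = blk e') = ∅ := by
  rw [Finset.filter_erase, hA.filter_eq_singleton he', Finset.erase_singleton]

/-- The derivative of `x ↦ blockProb blk x A (blk e')` in the coordinate `x_{e'}`. -/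
noncomputable def blockProbSlope (blk : Ω → N) (e' : Ω) (A : Finset Ω) : ℝ :=
  (if e' ∈ A then 1 else 0) - (if A.filter (fun a => blk a = blk e') = ∅ then 1 else 0)

lemma blockProb_update_self (x : Ω → ℝ) (e' : Ω) (t : ℝ) (A : Finset Ω) :
    blockProb blk (Function.update x e' t) A (blk e')
      = blockProb blk x A (blk e') + blockProbSlope blk e' A * (t - x e') := by
  unfold blockProb blockProbSlope
  by_cases h0 : A.filter (fun a => blk a = blk e') = ∅
  · simp only [if_pos h0, if_neg (notMem_of_filter_eq_empty h0),
      sum_update_eq_add_sub (e' := e') (s := Finset.univ.filter fun a => blk a = blk e')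
        (by simp)]
    ring
  · simp only [if_neg h0]
    by_cases he' : e' ∈ A
    · rw [if_pos he', sum_update_eq_add_sub (e' := e') (s := A.filter fun a => blk a = blk e')
        (by simp [he'])]
      ring
    · rw [if_neg he', Finset.sum_congr rfl fun a ha => Function.update_of_ne
        (ne_of_mem_of_not_mem (Finset.mem_filter.1 ha).1 he') t x]
      ring

lemma blockProb_update_of_ne {e' : Ω} {j : N} (hj : blk e' ≠ j) (x : Ω → ℝ) (t : ℝ)
    (A : Finset Ω) : blockProb blk (Function.update x e' t) A j = blockProb blk x A j := by
  have hsum : ∀ s : Finset Ω, ∑ a ∈ s.filter (fun a => blk a = j), Function.update x e' t a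
      = ∑ a ∈ s.filter (fun a => blk a = j), x a := fun s =>
    Finset.sum_congr rfl fun a ha => Function.update_of_ne
      (fun h : a = e' => hj (h ▸ (Finset.mem_filter.1 ha).2)) t x
  unfold blockProb
  rw [hsum, hsum]

lemma blockProb_insert_of_ne {a : Ω} {j : N} (h : blk a ≠ j) (x : Ω → ℝ) (A : Finset Ω) :
    blockProb blk x (insert a A) j = blockProb blk x A j := by
  unfold blockProb
  rw [Finset.filter_insert, if_neg h]

lemma blockProb_nonneg {x : Ω → ℝ} (hx : memPolytope blk x) (A : Finset Ω) (j : N) :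
    0 ≤ blockProb blk x A j := by
  unfold blockProb
  split
  · linarith [hx.2 j]
  · exact Finset.sum_nonneg fun a _ => (hx.1 a).1

structure IsClosedUnderToggle (blk : Ω → N) (e' : Ω) (S : Finset (Finset Ω)) : Prop where
  feasible_of_mem : ∀ A ∈ S, feasible blk A
  insert_mem : ∀ A ∈ S, A.filter (fun a => blk a = blk e') = ∅ → insert e' A ∈ S
  erase_mem : ∀ A ∈ S, e' ∈ A → A.erase e' ∈ S

lemma isClosedUnderToggle_feasible (blk : Ω → N) (e' : Ω) :
    IsClosedUnderToggle blk e' (Finset.univ.filter fun A => feasible blk A) where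
  feasible_of_mem _ hA := (Finset.mem_filter.1 hA).2
  insert_mem _ hA h0 :=
    Finset.mem_filter.2 ⟨Finset.mem_univ _, (Finset.mem_filter.1 hA).2.insert h0⟩
  erase_mem _ hA _ := Finset.mem_filter.2 ⟨Finset.mem_univ _, (Finset.mem_filter.1 hA).2.erase e'⟩

lemma IsClosedUnderToggle.filter {e' : Ω} {S : Finset (Finset Ω)}
    (hS : IsClosedUnderToggle blk e' S) {k : N} (hk : blk e' ≠ k) :
    IsClosedUnderToggle blk e' (S.filter fun A => A.filter (fun a => blk a = k) = ∅) where
  feasible_of_mem A hA := hS.feasible_of_mem A (Finset.mem_filter.1 hA).1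
  insert_mem A hA h0 := Finset.mem_filter.2
    ⟨hS.insert_mem A (Finset.mem_filter.1 hA).1 h0,
      filter_insert_eq_empty hk (Finset.mem_filter.1 hA).2⟩
  erase_mem A hA he' := Finset.mem_filter.2
    ⟨hS.erase_mem A (Finset.mem_filter.1 hA).1 he',
      filter_erase_eq_empty e' (Finset.mem_filter.1 hA).2⟩

lemma IsClosedUnderToggle.sum_filter_mem {e' : Ω} {S : Finset (Finset Ω)}
    (hS : IsClosedUnderToggle blk e' S) (φ : Finset Ω → ℝ) :
    ∑ A ∈ S with e' ∈ A, φ A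
      = ∑ A ∈ S with A.filter (fun a => blk a = blk e') = ∅, φ (insert e' A) := by
  symm
  refine Finset.sum_nbij' (insert e') (fun A => A.erase e') ?_ ?_ ?_ ?_ fun _ _ => rfl
  · intro A hA
    obtain ⟨hAS, h0⟩ := Finset.mem_filter.1 hA
    exact Finset.mem_filter.2 ⟨hS.insert_mem A hAS h0, Finset.mem_insert_self e' A⟩
  · intro A hA
    obtain ⟨hAS, he'⟩ := Finset.mem_filter.1 hA
    exact Finset.mem_filter.2
      ⟨hS.erase_mem A hAS he', (hS.feasible_of_mem A hAS).filter_erase_eq_empty he'⟩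
  · intro A hA
    exact Finset.erase_insert (notMem_of_filter_eq_empty (Finset.mem_filter.1 hA).2)
  · intro A hA
    exact Finset.insert_erase (Finset.mem_filter.1 hA).2

lemma IsClosedUnderToggle.sum_blockProbSlope_mul {e' : Ω} {S : Finset (Finset Ω)}
    (hS : IsClosedUnderToggle blk e' S) (φ : Finset Ω → ℝ) :
    ∑ A ∈ S, blockProbSlope blk e' A * φ A
      = ∑ A ∈ S with A.filter (fun a => blk a = blk e') = ∅, (φ (insert e' A) - φ A) := by
  simp only [blockProbSlope, sub_mul, ite_mul, one_mul, zero_mul, Finset.sum_sub_distrib,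
    ← Finset.sum_filter]
  rw [hS.sum_filter_mem]

lemma IsClosedUnderToggle.pderiv_sum_mul_prod_blockProb {e' : Ω} {S : Finset (Finset Ω)}
    (hS : IsClosedUnderToggle blk e' S) (c : Finset Ω → ℝ) {T : Finset N} (hT : blk e' ∈ T)
    (x : Ω → ℝ) :
    pderiv (fun y => ∑ A ∈ S, c A * ∏ j ∈ T, blockProb blk y A j) e' x
      = ∑ A ∈ S with A.filter (fun a => blk a = blk e') = ∅,
          (c (insert e' A) - c A) * ∏ j ∈ T.erase (blk e'), blockProb blk x A j := by
  set P : Finset Ω → ℝ := fun A => ∏ j ∈ T.erase (blk e'), blockProb blk x A j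
  have hP : ∀ A, P (insert e' A) = P A := fun A => Finset.prod_congr rfl fun j hj =>
    blockProb_insert_of_ne (Finset.ne_of_mem_erase hj).symm x A
  have hderiv : HasDerivAt
      (fun t => ∑ A ∈ S, c A * ∏ j ∈ T, blockProb blk (Function.update x e' t) A j)
      (∑ A ∈ S, blockProbSlope blk e' A * (c A * P A)) (x e') := by
    refine HasDerivAt.fun_sum fun A _ => ?_
    have hprod : ∀ t, ∏ j ∈ T, blockProb blk (Function.update x e' t) A j
        = (blockProb blk x A (blk e') + blockProbSlope blk e' A * (t - x e')) * P A := fun t => by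
      rw [← Finset.mul_prod_erase T _ hT, blockProb_update_self, Finset.prod_congr rfl
        fun j hj => blockProb_update_of_ne (Finset.ne_of_mem_erase hj).symm x t A]
    simp only [hprod]
    exact (((((hasDerivAt_id' (x e')).sub_const (x e')).const_mul
      (blockProbSlope blk e' A)).const_add (blockProb blk x A (blk e'))).mul_const
      (P A)).const_mul (c A) |>.congr_deriv (by ring)
  rw [pderiv, hderiv.deriv, hS.sum_blockProbSlope_mul]
  refine Finset.sum_congr rfl fun A _ => ?_
  rw [hP]
  ring

lemma pderiv_pme (F : Finset Ω → ℝ) (e : Ω) (x : Ω → ℝ) :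
    pderiv (pme blk F) e x
      = ∑ A ∈ (Finset.univ.filter fun A => feasible blk A) with
            A.filter (fun a => blk a = blk e) = ∅,
          (F (insert e A) - F A) * ∏ j ∈ Finset.univ.erase (blk e), blockProb blk x A j :=
  (isClosedUnderToggle_feasible blk e).pderiv_sum_mul_prod_blockProb F (Finset.mem_univ _) x

lemma pderiv_pderiv_pme (F : Finset Ω → ℝ) {e e' : Ω} (hee' : blk e' ≠ blk e) (x : Ω → ℝ) :
    pderiv (fun y => pderiv (pme blk F) e y) e' x =
      ∑ A ∈ Finset.univ.filter
          (fun A => feasible blk A ∧ A.filter (fun a => blk a = blk e) = ∅ ∧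
            A.filter (fun a => blk a = blk e') = ∅),
        (∏ j ∈ (Finset.univ.erase (blk e)).erase (blk e'), blockProb blk x A j) *
          ((F (insert e (insert e' A)) - F (insert e' A)) - (F (insert e A) - F A)) := by
  simp only [pderiv_pme]
  rw [((isClosedUnderToggle_feasible blk e').filter hee').pderiv_sum_mul_prod_blockProb _
    (Finset.mem_erase.2 ⟨hee', Finset.mem_univ _⟩), Finset.filter_filter, Finset.filter_filter]
  exact Finset.sum_congr rfl fun _ _ => mul_comm _ _

lemma pderiv_pderiv_pme_nonpos {F : Finset Ω → ℝ} (hF : Submodular F) {e e' : Ω}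
    (hee' : blk e' ≠ blk e) {x : Ω → ℝ} (hx : memPolytope blk x) :
    pderiv (fun y => pderiv (pme blk F) e y) e' x ≤ 0 := by
  rw [pderiv_pderiv_pme F hee']
  refine Finset.sum_nonpos fun A hA => mul_nonpos_of_nonneg_of_nonpos
    (Finset.prod_nonneg fun j _ => blockProb_nonneg hx A j) (sub_nonpos.2 ?_)
  have heA : e ∉ insert e' A := by
    rw [Finset.mem_insert, not_or]
    exact ⟨fun h => hee' (congrArg blk h.symm),
      notMem_of_filter_eq_empty (Finset.mem_filter.1 hA).2.2.1⟩
  exact hF A (insert e' A) (Finset.subset_insert e' A) e heA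

end PartitionMultilinearExtension

theorem pme_mixed_second_partial_general {N Ω : Type*} [Fintype N] [Fintype Ω]
    (blk : Ω → N)
    (F : Finset Ω → ℝ) (i u : N) (e e' : Ω)
    (he : blk e = i) (he' : blk e' = u) (hiu : u ≠ i) :
    (∀ x : Ω → ℝ,
      pderiv (fun y => pderiv (pme blk F) e y) e' x =
        ∑ A ∈ Finset.univ.filter
            (fun A => feasible blk A ∧ A.filter (fun a => blk a = i) = ∅ ∧
              A.filter (fun a => blk a = u) = ∅),
          (∏ j ∈ (Finset.univ.erase i).erase u, blockProb blk x A j) *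
            ((F (insert e (insert e' A)) - F (insert e' A)) - (F (insert e A) - F A))) ∧
    (Submodular F →
      ∀ x : Ω → ℝ, memPolytope blk x →
        pderiv (fun y => pderiv (pme blk F) e y) e' x ≤ 0) := by
  subst he he'
  exact ⟨pderiv_pderiv_pme F hiu, fun hF _ hx => pderiv_pderiv_pme_nonpos hF hiu hx⟩

/-- for `e ∈ Ω_i` and `e' ∈ Ω_u` in distinct blocks (`u ≠ i`), the mixed
second partial derivative `∂²f̃/∂x_{e'}∂x_e` equals the sum over feasible sets avoiding
both blocks of the product of the other blocks' factors times the difference of marginal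
gains; and if `F` is submodular this mixed partial is nonpositive on the polytope. -/
theorem pme_mixed_second_partial {N Ω : Type*} [Fintype N] [Fintype Ω]
    (blk : Ω → N) (hblk : Function.Surjective blk)
    (F : Finset Ω → ℝ) (i u : N) (e e' : Ω)
    (he : blk e = i) (he' : blk e' = u) (hiu : u ≠ i) :
    (∀ x : Ω → ℝ,
      pderiv (fun y => pderiv (pme blk F) e y) e' x =
        ∑ A ∈ Finset.univ.filter
            (fun A => feasible blk A ∧ A.filter (fun a => blk a = i) = ∅ ∧
              A.filter (fun a => blk a = u) = ∅),
          (∏ j ∈ (Finset.univ.erase i).erase u, blockProb blk x A j) *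
            ((F (insert e (insert e' A)) - F (insert e' A)) - (F (insert e A) - F A))) ∧
    (Submodular F →
      ∀ x : Ω → ℝ, memPolytope blk x →
        pderiv (fun y => pderiv (pme blk F) e y) e' x ≤ 0) :=
  pme_mixed_second_partial_general blk F i u e e' he he' hiu
end

section
/- Let F : 2^Ω → ℝ be normalized, monotone, and submodular, and let f̃ be its partition multilinear extension. Then for all x, y in the categorical face 𝓕 = {x ∈ [0,1]^Ω : Σ_{e ∈ Ω_i} x_e = 1 for all i ∈ N}, the restricted DR first-order gap inequality holds: (1/2)·f̃(y) − f̃(x) ≤ (1/2)·Σ_{e ∈ Ω} ∂f̃/∂x_e(x) · (y_e − x_e). -/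
open Finset
open scoped Classical

/-!
On the partition matroid polytope every block factor `p_i(·; x)` is a probability vector on the
choices "nothing" ∪ `Ω_i` available in block `i`, and `f̃ = Φ ∘ p` with `Φ` multilinear in the
block factors. Hence `⟨∇f̃(x), y − x⟩ = Σ_i (Φ(p(x) with block i taken from p(y)) − Φ(p(x)))`,
which for independent random feasible sets `S ~ x`, `T ~ y` is
`E Σ_i (F(S ∖ Ω_i ∪ T_i) − F(S))`. Pointwise, submodularity bounds the gains
`Σ_i (F(S ∖ Ω_i ∪ T_i) − F(S ∖ Ω_i))` below by `F(S ∪ T) − F(S) ≥ F(T) − F(S)` and the losses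
`Σ_i (F(S) − F(S ∖ Ω_i))` above by `F(S)`, so the sum is at least `F(T) − 2 F(S)`.
-/

section

open Function

variable {N Ω : Type*} [Fintype Ω] {blk : Ω → N}

-- A feasible set of the partition matroid, recorded by what it picks in each block.
variable (blk) in
abbrev BlockChoice := ∀ i : N, Option {e : Ω // blk e = i}

namespace BlockChoice

noncomputable def toFinset (σ : BlockChoice blk) : Finset Ω :=
  univ.filter fun e => σ (blk e) = some ⟨e, rfl⟩

theorem mem_toFinset {σ : BlockChoice blk} {e : Ω} :
    e ∈ toFinset σ ↔ σ (blk e) = some ⟨e, rfl⟩ := by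
  simp [toFinset]

theorem coe_mem_toFinset {σ : BlockChoice blk} {i : N} (a : {e : Ω // blk e = i}) :
    (a : Ω) ∈ toFinset σ ↔ σ i = some a := by
  obtain ⟨e, rfl⟩ := a
  simp [toFinset]

theorem filter_toFinset (σ : BlockChoice blk) (i : N) :
    (toFinset σ).filter (fun e => blk e = i) =
      (σ i).toFinset.map (Function.Embedding.subtype _) := by
  ext e
  simp only [mem_filter, mem_map, Option.mem_toFinset, Option.mem_def,
    Function.Embedding.coe_subtype]
  constructor
  · rintro ⟨he, rfl⟩
    exact ⟨⟨e, rfl⟩, (coe_mem_toFinset ⟨e, rfl⟩).1 he, rfl⟩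
  · rintro ⟨a, ha, rfl⟩
    exact ⟨(coe_mem_toFinset a).2 ha, a.2⟩

theorem feasible_toFinset [Fintype N] (σ : BlockChoice blk) : feasible blk (toFinset σ) :=
  fun i => by
    rw [filter_toFinset, card_map, Option.card_toFinset]
    cases σ i <;> simp

theorem toFinset_injective : Injective (toFinset : BlockChoice blk → Finset Ω) :=
  fun σ τ h => funext fun i => Option.ext fun a => by
    rw [← coe_mem_toFinset, ← coe_mem_toFinset, h]

theorem exists_toFinset_eq [Fintype N] {A : Finset Ω} (hA : feasible blk A) :
    ∃ σ : BlockChoice blk, toFinset σ = A := by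
  have hblock : ∀ i, ∃ o : Option {e : Ω // blk e = i},
      ∀ a : {e : Ω // blk e = i}, (a : Ω) ∈ A ↔ o = some a := by
    intro i
    by_cases h : ∃ a : {e : Ω // blk e = i}, (a : Ω) ∈ A
    · obtain ⟨a, ha⟩ := h
      refine ⟨some a, fun b => ⟨fun hb => ?_, fun hb => by rwa [← Option.some_inj.1 hb]⟩⟩
      exact congrArg some (Subtype.ext (card_le_one.1 (hA i) _ (mem_filter.2 ⟨hb, b.2⟩) _
        (mem_filter.2 ⟨ha, a.2⟩))).symm
    · push Not at h
      exact ⟨none, fun a => by simp [h a]⟩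
  choose σ hσ using hblock
  exact ⟨σ, Finset.ext fun e => by rw [hσ (blk e) ⟨e, rfl⟩, ← coe_mem_toFinset]⟩

theorem toFinset_update_none_subset (σ : BlockChoice blk) (i : N) :
    toFinset (update σ i none) ⊆ toFinset σ := by
  intro e he
  rw [mem_toFinset] at he ⊢
  by_cases h : blk e = i
  · subst h; simp at he
  · rwa [update_of_ne h] at he

theorem not_mem_toFinset_update_none (σ : BlockChoice blk) {i : N} (a : {e : Ω // blk e = i}) :
    (a : Ω) ∉ toFinset (update σ i none) := by
  simp [coe_mem_toFinset]

theorem toFinset_update_some (σ : BlockChoice blk) {i : N} (a : {e : Ω // blk e = i}) :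
    toFinset (update σ i (some a)) = insert (a : Ω) (toFinset (update σ i none)) := by
  ext e
  rw [mem_insert, mem_toFinset, mem_toFinset]
  by_cases h : blk e = i
  · subst h; obtain ⟨a, ha⟩ := a
    simp [eq_comm]
  · have hea : e ≠ a := fun hea => h (hea ▸ a.2)
    simp [h, hea]

theorem sum_elim_eq_sum_toFinset [Fintype N] (σ : BlockChoice blk) (g : Ω → ℝ) :
    ∑ i, (σ i).elim 0 (fun a => g a) = ∑ e ∈ toFinset σ, g e := by
  rw [← sum_fiberwise (toFinset σ) blk g]
  refine sum_congr rfl fun i _ => ?_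
  rw [filter_toFinset, sum_map]
  cases σ i <;> simp

end BlockChoice

namespace Submodular

variable {α : Type*} [Fintype α] {F : Finset α → ℝ}

theorem sub_le_sum_insert_sub (hF : Submodular F) (A B : Finset α) :
    F (A ∪ B) - F A ≤ ∑ b ∈ B, (F (insert b A) - F A) := by
  induction B using Finset.induction_on with
  | empty => simp
  | @insert b B hb ih =>
    rw [sum_insert hb, union_insert]
    by_cases hbA : b ∈ A
    · rw [insert_eq_of_mem (mem_union_left B hbA), insert_eq_of_mem hbA]
      linarith
    · have := hF A (A ∪ B) subset_union_left b (by simp [hbA, hb])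
      linarith

theorem sum_sub_erase_le (hF : Submodular F) (A : Finset α) :
    ∑ a ∈ A, (F A - F (A.erase a)) ≤ F A - F ∅ := by
  induction A using Finset.induction_on with
  | empty => simp
  | @insert a A ha ih =>
    rw [sum_insert ha, erase_insert ha]
    have hterm : ∀ b ∈ A, F (insert a A) - F ((insert a A).erase b) ≤ F A - F (A.erase b) := by
      intro b hb
      rw [erase_insert_of_ne (ne_of_mem_of_not_mem hb ha).symm]
      linarith [hF (A.erase b) A (erase_subset b A) a ha]
    linarith [sum_le_sum hterm]

end Submodular

namespace BlockChoice

variable {F : Finset Ω → ℝ}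

theorem sub_toFinset_update_none (σ : BlockChoice blk) (i : N) :
    F (toFinset σ) - F (toFinset (update σ i none)) =
      (σ i).elim 0 fun a => F (toFinset σ) - F ((toFinset σ).erase a) := by
  cases hσ : σ i with
  | none => rw [Option.elim_none, ← hσ, update_eq_self, sub_self]
  | some a =>
    have hupd : toFinset σ = insert (a : Ω) (toFinset (update σ i none)) := by
      rw [← toFinset_update_some, ← hσ, update_eq_self]
    simp [hupd, erase_insert (not_mem_toFinset_update_none σ a)]

theorem elim_insert_sub_le (hmono : ∀ A B : Finset Ω, A ⊆ B → F A ≤ F B) (hsub : Submodular F)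
    (σ : BlockChoice blk) (i : N) (o : Option {e : Ω // blk e = i}) :
    o.elim 0 (fun b => F (insert (b : Ω) (toFinset σ)) - F (toFinset σ)) ≤
      F (toFinset (update σ i o)) - F (toFinset (update σ i none)) := by
  cases o with
  | none => simp
  | some b =>
    rw [Option.elim_some, toFinset_update_some]
    by_cases hb : (b : Ω) ∈ toFinset σ
    · rw [insert_eq_of_mem hb, sub_self, sub_nonneg]
      exact hmono _ _ (subset_insert _ _)
    · exact hsub _ _ (toFinset_update_none_subset σ i) _ hb

theorem sub_two_mul_le_sum_update [Fintype N] (hnorm : F ∅ = 0)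
    (hmono : ∀ A B : Finset Ω, A ⊆ B → F A ≤ F B) (hsub : Submodular F) (σ τ : BlockChoice blk) :
    F (toFinset τ) - 2 * F (toFinset σ) ≤
      ∑ i, (F (toFinset (update σ i (τ i))) - F (toFinset σ)) := by
  have hgain : F (toFinset σ ∪ toFinset τ) - F (toFinset σ) ≤
      ∑ i, (F (toFinset (update σ i (τ i))) -
        F (toFinset (update σ i none))) :=
    calc F (toFinset σ ∪ toFinset τ) - F (toFinset σ)
        ≤ ∑ b ∈ toFinset τ, (F (insert b (toFinset σ)) - F (toFinset σ)) :=
          hsub.sub_le_sum_insert_sub _ _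
      _ = ∑ i, (τ i).elim 0 fun b => F (insert (b : Ω) (toFinset σ)) - F (toFinset σ) :=
          (sum_elim_eq_sum_toFinset τ _).symm
      _ ≤ _ := sum_le_sum fun i _ => elim_insert_sub_le hmono hsub σ i (τ i)
  have hloss : ∑ i, (F (toFinset σ) - F (toFinset (update σ i none))) ≤
      F (toFinset σ) := by
    simp_rw [sub_toFinset_update_none,
      sum_elim_eq_sum_toFinset σ fun a => F (toFinset σ) - F ((toFinset σ).erase a)]
    simpa [hnorm] using hsub.sum_sub_erase_le (toFinset σ)
  have hunion := hmono _ _ (subset_union_right : toFinset τ ⊆ toFinset σ ∪ toFinset τ)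
  have hsplit : ∑ i, (F (toFinset (update σ i (τ i))) - F (toFinset σ)) =
      ∑ i, (F (toFinset (update σ i (τ i))) - F (toFinset (update σ i none))) -
        ∑ i, (F (toFinset σ) - F (toFinset (update σ i none))) := by
    rw [← sum_sub_distrib]
    exact sum_congr rfl fun i _ => by ring
  linarith

end BlockChoice

section ProductWeight

variable {ι : Type*} [Fintype ι] [DecidableEq ι] {α : ι → Type*}

theorem sum_prod_apply_eq_one [∀ i, Fintype (α i)] {p : ∀ i, α i → ℝ} (hp : ∀ i, ∑ a, p i a = 1) :
    ∑ σ : ∀ i, α i, ∏ i, p i (σ i) = 1 := by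
  rw [← Fintype.prod_sum]
  exact prod_eq_one fun i _ => hp i

theorem prod_update_apply_update (p : ∀ i, α i → ℝ) (σ : ∀ i, α i) (i : ι) (u : α i → ℝ)
    (a : α i) :
    ∏ j, update p i u j (update σ i a j) = u a * ∏ j ∈ univ.erase i, p j (σ j) := by
  simp_rw [apply_update₂ (fun j (r : α j → ℝ) (b : α j) => r b)]
  rw [prod_update_of_mem (mem_univ i), sdiff_singleton_eq_erase]

theorem sum_sum_prod_mul_fst [∀ i, Fintype (α i)] {q : ∀ i, α i → ℝ}
    (hq : ∀ j, ∑ a, q j a = 1) (p : ∀ i, α i → ℝ) (G : (∀ i, α i) → ℝ) :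
    ∑ σ : ∀ i, α i, ∑ τ : ∀ i, α i, (∏ j, p j (σ j)) * (∏ j, q j (τ j)) * G σ =
      ∑ σ : ∀ i, α i, (∏ j, p j (σ j)) * G σ := by
  refine sum_congr rfl fun σ _ => ?_
  rw [← sum_mul, ← mul_sum, sum_prod_apply_eq_one hq, mul_one]

theorem sum_sum_prod_mul_snd [∀ i, Fintype (α i)] {p : ∀ i, α i → ℝ}
    (hp : ∀ j, ∑ a, p j a = 1) (q : ∀ i, α i → ℝ) (G : (∀ i, α i) → ℝ) :
    ∑ σ : ∀ i, α i, ∑ τ : ∀ i, α i, (∏ j, p j (σ j)) * (∏ j, q j (τ j)) * G τ =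
      ∑ τ : ∀ i, α i, (∏ j, q j (τ j)) * G τ := by
  rw [sum_comm]
  refine sum_congr rfl fun τ _ => ?_
  rw [← sum_mul, ← sum_mul, sum_prod_apply_eq_one hp, one_mul]

-- The involution exchanging the `i`-th coordinates of `σ` and `τ` carries the weight of `(σ, τ)`
-- under `(p, q)` to the weight of the swapped pair under the swapped weight families.
theorem sum_sum_prod_mul_update [∀ i, Fintype (α i)] {p q : ∀ i, α i → ℝ} (i : ι)
    (hp : ∑ a, p i a = 1) (hq : ∀ j, ∑ a, q j a = 1) (G : (∀ i, α i) → ℝ) :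
    ∑ σ : ∀ i, α i, ∑ τ : ∀ i, α i,
        (∏ j, p j (σ j)) * (∏ j, q j (τ j)) * G (update σ i (τ i)) =
      ∑ σ : ∀ i, α i, (∏ j, update p i (q i) j (σ j)) * G σ := by
  let swapAt : (∀ i, α i) × (∀ i, α i) → (∀ i, α i) × (∀ i, α i) :=
    fun στ => (update στ.1 i (στ.2 i), update στ.2 i (στ.1 i))
  have hswap : Involutive swapAt := fun στ => by simp [swapAt]
  have hweight : ∀ σ τ : ∀ i, α i, (∏ j, p j (σ j)) * (∏ j, q j (τ j)) =
      (∏ j, update p i (q i) j ((swapAt (σ, τ)).1 j)) *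
        ∏ j, update q i (p i) j ((swapAt (σ, τ)).2 j) := by
    intro σ τ
    simp only [swapAt]
    rw [prod_update_apply_update, prod_update_apply_update, ← mul_prod_erase univ _ (mem_univ i),
      ← mul_prod_erase univ (fun j => q j (τ j)) (mem_univ i)]
    ring
  have hq' : ∀ j, ∑ a, update q i (p i) j a = 1 := fun j => by
    by_cases hj : j = i
    · subst hj; simpa using hp
    · simpa [update_of_ne hj] using hq j
  let g : (∀ i, α i) × (∀ i, α i) → ℝ := fun στ =>
    (∏ j, update p i (q i) j (στ.1 j)) * (∏ j, update q i (p i) j (στ.2 j)) *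
      G στ.1
  calc ∑ σ : ∀ i, α i, ∑ τ : ∀ i, α i,
        (∏ j, p j (σ j)) * (∏ j, q j (τ j)) * G (update σ i (τ i))
      = ∑ στ, g (hswap.toPerm _ στ) := by
        rw [← Fintype.sum_prod_type']
        exact sum_congr rfl fun στ _ => by rw [hweight]; rfl
    _ = ∑ σ : ∀ i, α i, (∏ j, update p i (q i) j (σ j)) * G σ := by
        rw [Equiv.sum_comp, Fintype.sum_prod_type]
        refine sum_congr rfl fun σ _ => ?_
        simp_rw [g, mul_right_comm _ _ (G σ), ← mul_sum, sum_prod_apply_eq_one hq', mul_one]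

theorem ContinuousMultilinearMap.linearDeriv_sub_eq_sum {M : ι → Type*}
    [∀ i, AddCommGroup (M i)] [∀ i, Module ℝ (M i)] [∀ i, TopologicalSpace (M i)]
    (f : ContinuousMultilinearMap ℝ M ℝ) (p q : ∀ i, M i) :
    f.linearDeriv p (q - p) = ∑ i, (f (update p i (q i)) - f p) := by
  simp_rw [linearDeriv_apply, Pi.sub_apply, map_update_sub, update_eq_self]

end ProductWeight

open BlockChoice

variable (blk)

-- `blockWeight blk z i (σ i) = p_i(A; z)` for the feasible set `A = toFinset σ`.
noncomputable def blockWeight (z : Ω → ℝ) (i : N) (o : Option {e : Ω // blk e = i}) : ℝ :=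
  o.elim (1 - ∑ e ∈ univ.filter (fun e => blk e = i), z e) fun a => z a

noncomputable def blockWeightLinear : (Ω → ℝ) →L[ℝ] ∀ i : N, Option {e : Ω // blk e = i} → ℝ :=
  ContinuousLinearMap.pi fun i => ContinuousLinearMap.pi fun o =>
    o.elim (-∑ e ∈ univ.filter (fun e => blk e = i), ContinuousLinearMap.proj e)
      fun a => ContinuousLinearMap.proj (a : Ω)

theorem blockWeight_eq_add (z : Ω → ℝ) :
    blockWeight blk z = blockWeight blk 0 + blockWeightLinear blk z := by
  ext i o
  cases o <;> simp [blockWeight, blockWeightLinear, sub_eq_add_neg]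

theorem sum_blockWeight (z : Ω → ℝ) (i : N) : ∑ o, blockWeight blk z i o = 1 := by
  simp only [Fintype.sum_option, blockWeight, Option.elim_none, Option.elim_some]
  rw [← sum_subtype (univ.filter fun e => blk e = i) (by simp) z, sub_add_cancel]

variable [Fintype N]

noncomputable def pmeForm (F : Finset Ω → ℝ) :
    ContinuousMultilinearMap ℝ (fun i : N => Option {e : Ω // blk e = i} → ℝ) ℝ :=
  ∑ σ : BlockChoice blk, F (toFinset σ) •
    (ContinuousMultilinearMap.mkPiAlgebra ℝ N ℝ).compContinuousLinearMap
      fun i => ContinuousLinearMap.proj (σ i)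

theorem pmeForm_apply (F : Finset Ω → ℝ) (p : ∀ i : N, Option {e : Ω // blk e = i} → ℝ) :
    pmeForm blk F p = ∑ σ : BlockChoice blk, (∏ i, p i (σ i)) * F (toFinset σ) := by
  simp [pmeForm, mul_comm]

theorem blockProb_toFinset (z : Ω → ℝ) (σ : BlockChoice blk) (i : N) :
    blockProb blk z (toFinset σ) i = blockWeight blk z i (σ i) := by
  rw [blockProb, filter_toFinset]
  cases σ i <;> simp [blockWeight]

theorem pme_eq_pmeForm (F : Finset Ω → ℝ) (z : Ω → ℝ) :
    pme blk F z = pmeForm blk F (blockWeight blk z) := by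
  rw [pmeForm_apply, pme]
  symm
  refine sum_bij (fun σ _ => toFinset σ) (fun σ _ => mem_filter.2 ⟨mem_univ _, feasible_toFinset σ⟩)
    (fun σ _ τ _ h => toFinset_injective h) (fun A hA => ?_) (fun σ _ => ?_)
  · obtain ⟨σ, rfl⟩ := exists_toFinset_eq (mem_filter.1 hA).2
    exact ⟨σ, mem_univ σ, rfl⟩
  · simp only [blockProb_toFinset, mul_comm]

theorem hasFDerivAt_pme (F : Finset Ω → ℝ) (z : Ω → ℝ) :
    HasFDerivAt (pme blk F)
      ((pmeForm blk F).linearDeriv (blockWeight blk z) ∘L blockWeightLinear blk) z := by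
  have hweight : HasFDerivAt (blockWeight blk) (blockWeightLinear blk) z := by
    rw [funext (blockWeight_eq_add blk)]
    exact (blockWeightLinear blk).hasFDerivAt.const_add _
  rw [funext (pme_eq_pmeForm blk F)]
  exact (pmeForm blk F).hasFDerivAt _ |>.comp z hweight

theorem sum_pderiv_pme_mul (F : Finset Ω → ℝ) (x w : Ω → ℝ) :
    ∑ e, pderiv (pme blk F) e x * w e =
      (pmeForm blk F).linearDeriv (blockWeight blk x) (blockWeightLinear blk w) := by
  have hpartial : ∀ e, pderiv (pme blk F) e x =
      ((pmeForm blk F).linearDeriv (blockWeight blk x) ∘L blockWeightLinear blk)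
        (Pi.single e 1) := by
    intro e
    refine HasDerivAt.deriv ?_
    have := (hasFDerivAt_pme blk F _).comp_hasDerivAt (x e) (hasDerivAt_update x e (x e))
    rwa [update_eq_self] at this
  simp_rw [hpartial]
  conv_rhs => rw [← ContinuousLinearMap.comp_apply, ← univ_sum_single w, map_sum]
  refine sum_congr rfl fun e _ => ?_
  rw [mul_comm, ← smul_eq_mul, ← map_smul, ← Pi.single_smul', smul_eq_mul, mul_one]

theorem blockWeight_nonneg {z : Ω → ℝ} (hz : memPolytope blk z) (i : N)
    (o : Option {e : Ω // blk e = i}) : 0 ≤ blockWeight blk z i o := by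
  cases o with
  | none => simpa [blockWeight] using hz.2 i
  | some a => exact (hz.1 a).1

theorem memPolytope_of_memFace {z : Ω → ℝ} (hz : memFace blk z) : memPolytope blk z :=
  ⟨hz.1, fun i => (hz.2 i).le⟩

theorem pmeForm_sub_two_mul_le {F : Finset Ω → ℝ} (hnorm : F ∅ = 0)
    (hmono : ∀ A B : Finset Ω, A ⊆ B → F A ≤ F B) (hsub : Submodular F)
    {p q : ∀ i : N, Option {e : Ω // blk e = i} → ℝ} (hp0 : ∀ i o, 0 ≤ p i o)
    (hq0 : ∀ i o, 0 ≤ q i o) (hp1 : ∀ i, ∑ o, p i o = 1) (hq1 : ∀ i, ∑ o, q i o = 1) :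
    pmeForm blk F q - 2 * pmeForm blk F p ≤ (pmeForm blk F).linearDeriv p (q - p) := by
  let E : (BlockChoice blk → BlockChoice blk → ℝ) → ℝ := fun G =>
    ∑ σ, ∑ τ, (∏ i, p i (σ i)) * (∏ i, q i (τ i)) * G σ τ
  have hq : pmeForm blk F q = E fun _ τ => F (toFinset τ) := by
    rw [pmeForm_apply]
    exact (sum_sum_prod_mul_snd hp1 q _).symm
  have hp : pmeForm blk F p = E fun σ _ => F (toFinset σ) := by
    rw [pmeForm_apply]
    exact (sum_sum_prod_mul_fst hq1 p _).symm
  have hupdate : ∀ i, pmeForm blk F (update p i (q i)) =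
      E fun σ τ => F (toFinset (update σ i (τ i))) := fun i => by
    rw [pmeForm_apply]
    exact (sum_sum_prod_mul_update i (hp1 i) hq1 _).symm
  rw [ContinuousMultilinearMap.linearDeriv_sub_eq_sum, hq, hp]
  simp_rw [hupdate]
  have hweight : ∀ σ τ : BlockChoice blk, 0 ≤ (∏ i, p i (σ i)) * ∏ i, q i (τ i) := fun σ τ =>
    mul_nonneg (prod_nonneg fun i _ => hp0 i _) (prod_nonneg fun i _ => hq0 i _)
  calc E (fun _ τ => F (toFinset τ)) - 2 * E (fun σ _ => F (toFinset σ))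
      = E fun σ τ => F (toFinset τ) - 2 * F (toFinset σ) := by
        simp only [E, mul_sum, ← sum_sub_distrib, mul_sub]
        exact sum_congr rfl fun _ _ => sum_congr rfl fun _ _ => by ring
    _ ≤ E fun σ τ => ∑ i, (F (toFinset (update σ i (τ i))) - F (toFinset σ)) :=
        sum_le_sum fun σ _ => sum_le_sum fun τ _ => mul_le_mul_of_nonneg_left
          (sub_two_mul_le_sum_update hnorm hmono hsub σ τ) (hweight σ τ)
    _ = ∑ i, (E (fun σ τ => F (toFinset (update σ i (τ i)))) -
          E fun σ _ => F (toFinset σ)) := by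
        simp only [E, mul_sum, ← sum_sub_distrib, mul_sub]
        exact (sum_congr rfl fun _ _ => sum_comm).trans sum_comm

theorem pme_dr_gap_of_memPolytope (F : Finset Ω → ℝ) (hnorm : F ∅ = 0)
    (hmono : ∀ A B : Finset Ω, A ⊆ B → F A ≤ F B) (hsub : Submodular F) {x y : Ω → ℝ}
    (hx : memPolytope blk x) (hy : memPolytope blk y) :
    (1 / 2) * pme blk F y - pme blk F x ≤
      (1 / 2) * ∑ e : Ω, pderiv (pme blk F) e x * (y e - x e) := by
  have hgap := pmeForm_sub_two_mul_le blk hnorm hmono hsub (blockWeight_nonneg blk hx)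
    (blockWeight_nonneg blk hy) (sum_blockWeight blk x) (sum_blockWeight blk y)
  have hlinear : blockWeightLinear blk (y - x) = blockWeight blk y - blockWeight blk x := by
    rw [map_sub, blockWeight_eq_add blk y, blockWeight_eq_add blk x, add_sub_add_left_eq_sub]
  have hderiv : ∑ e, pderiv (pme blk F) e x * (y e - x e) =
      (pmeForm blk F).linearDeriv (blockWeight blk x) (blockWeightLinear blk (y - x)) :=
    sum_pderiv_pme_mul blk F x (y - x)
  rw [hderiv, hlinear, pme_eq_pmeForm, pme_eq_pmeForm]
  linarith

end

theorem pme_dr_gap_on_face_general {N Ω : Type*} [Fintype N] [Fintype Ω]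
    (blk : Ω → N)
    (F : Finset Ω → ℝ)
    (hnorm : F ∅ = 0)
    (hmono : ∀ A B : Finset Ω, A ⊆ B → F A ≤ F B)
    (hsub : Submodular F)
    (x y : Ω → ℝ) (hx : memFace blk x) (hy : memFace blk y) :
    (1 / 2) * pme blk F y - pme blk F x ≤
      (1 / 2) * ∑ e : Ω, pderiv (pme blk F) e x * (y e - x e) :=
  pme_dr_gap_of_memPolytope blk F hnorm hmono hsub (memPolytope_of_memFace blk hx)
    (memPolytope_of_memFace blk hy)

/-- restricted DR first-order gap inequality on the categorical face:
for normalized, monotone, submodular `F` and all `x, y` in the categorical face,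
`(1/2)·f̃(y) − f̃(x) ≤ (1/2)·⟨∇f̃(x), y − x⟩`. -/
theorem pme_dr_gap_on_face {N Ω : Type*} [Fintype N] [Fintype Ω]
    (blk : Ω → N) (hblk : Function.Surjective blk)
    (F : Finset Ω → ℝ)
    (hnorm : F ∅ = 0)
    (hmono : ∀ A B : Finset Ω, A ⊆ B → F A ≤ F B)
    (hsub : Submodular F)
    (x y : Ω → ℝ) (hx : memFace blk x) (hy : memFace blk y) :
    (1 / 2) * pme blk F y - pme blk F x ≤
      (1 / 2) * ∑ e : Ω, pderiv (pme blk F) e x * (y e - x e) :=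
  pme_dr_gap_on_face_general blk F hnorm hmono hsub x y hx hy
end

section
/- Let T ≥ 1, let C_1, …, C_T be nonempty closed convex subsets of Euclidean space ℝ^d with ‖u − v‖₂ ≤ D whenever u ∈ C_t and v ∈ C_s for any t, s ∈ {1,…,T}. For each t, let f_t : ℝ^d → ℝ be differentiable with ‖∇f_t(x)‖₂ ≤ G for all x ∈ C_t, and satisfying the restricted DR first-order gap inequality on C_t: (1/2)f_t(y) − f_t(x) ≤ (1/2)⟨∇f_t(x), y − x⟩ for all x, y ∈ C_t. Fix comparators x_t* ∈ C_t and set the path length P = Σ_{t=1}^{T−1} ‖x_t* − x_{t+1}*‖₂. Fix a constant step size η > 0, let x_1 ∈ C_1, and for each t define x̄_{t+1} as the Euclidean projection of x_t + η·∇f_t(x_t) onto C_t, and (for t < T) x_{t+1} as the Euclidean projection of x̄_{t+1} onto C_{t+1}. Then Σ_{t=1}^{T} [ (1/2)·f_t(x_t*) − f_t(x_t) ] ≤ D²/(4η) + D·P/(2η) + η·T·G²/4. In particular, choosing η = √( D(D + 2P) / (T·G²) ) (with G > 0) gives Σ_{t=1}^{T} [ (1/2)·f_t(x_t*) − f_t(x_t)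 ] ≤ (1/2)·√( D(D + 2P)·T·G² ). -/
/-!
Write `xₜ*` for the comparator. Each round, the DR gap inequality and the projection inequality for
`x̄ₜ₊₁` turn `4η · (½ fₜ(xₜ*) − fₜ(xₜ))` into `‖xₜ − xₜ*‖² − ‖x̄ₜ₊₁ − xₜ*‖² + η²G²`. The second
projection is nonexpansive towards `xₜ₊₁* ∈ Cₜ₊₁`, so moving the comparator costs at most
`‖xₜ₊₁ − xₜ₊₁*‖² − ‖x̄ₜ₊₁ − xₜ*‖² ≤ 2D‖xₜ* − xₜ₊₁*‖`; summing, the squared distances telescope to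
at most `D² + 2DP`. Balancing `(D² + 2DP)/(4η)` against `ηTG²/4` gives the tuned bound.
-/

open Finset
open scoped InnerProductSpace

section Projection

variable {E : Type*} [NormedAddCommGroup E] [InnerProductSpace ℝ E]

theorem sq_norm_sub_le_of_inner_sub_nonpos {z p y : E} (h : ⟪z - p, y - p⟫_ℝ ≤ 0) :
    ‖p - y‖ ^ 2 ≤ ‖z - y‖ ^ 2 := by
  have hsplit : z - y = (z - p) + (p - y) := by abel
  have hinner : ⟪z - p, p - y⟫_ℝ = -⟪z - p, y - p⟫_ℝ := by rw [← inner_neg_right, neg_sub]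
  rw [hsplit, norm_add_sq_real, hinner]
  nlinarith [sq_nonneg ‖z - p‖]

theorem norm_sub_le_of_inner_sub_nonpos {z p y : E} (h : ⟪z - p, y - p⟫_ℝ ≤ 0) :
    ‖p - y‖ ≤ ‖z - y‖ :=
  (pow_le_pow_iff_left₀ (norm_nonneg _) (norm_nonneg _) two_ne_zero).mp
    (sq_norm_sub_le_of_inner_sub_nonpos h)

theorem two_mul_inner_le_of_projected_step {x g p y : E} {η : ℝ}
    (h : ⟪x + η • g - p, y - p⟫_ℝ ≤ 0) :
    2 * η * ⟪g, y - x⟫_ℝ ≤ ‖x - y‖ ^ 2 - ‖p - y‖ ^ 2 + η ^ 2 * ‖g‖ ^ 2 := by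
  have hproj := sq_norm_sub_le_of_inner_sub_nonpos h
  have hexpand : ‖x + η • g - y‖ ^ 2 = ‖x - y‖ ^ 2 - 2 * η * ⟪g, y - x⟫_ℝ + η ^ 2 * ‖g‖ ^ 2 := by
    rw [show x + η • g - y = (x - y) + η • g by abel, norm_add_sq_real, real_inner_smul_right,
      norm_smul, Real.norm_eq_abs, mul_pow, sq_abs, real_inner_comm, ← neg_sub y x, inner_neg_right]
    ring
  linarith

end Projection

theorem sq_norm_sub_sub_sq_norm_sub_le {E : Type*} [SeminormedAddCommGroup E] {p z u v : E}
    {D : ℝ} (hpz : ‖p - v‖ ≤ ‖z - v‖) (hp : ‖p - v‖ ≤ D) (hz : ‖z - u‖ ≤ D) :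
    ‖p - v‖ ^ 2 - ‖z - u‖ ^ 2 ≤ 2 * D * ‖u - v‖ := by
  have htri := norm_sub_le_norm_sub_add_norm_sub z u v
  nlinarith [norm_nonneg (p - v), norm_nonneg (z - u), norm_nonneg (u - v)]

theorem four_mul_dr_regret_le_of_projected_step {E : Type*} [NormedAddCommGroup E]
    [InnerProductSpace ℝ E] [CompleteSpace E] {f : E → ℝ} {x y p : E} {η G : ℝ} (hη : 0 ≤ η)
    (hDR : (1 / 2) * f y - f x ≤ (1 / 2) * ⟪gradient f x, y - x⟫_ℝ) (hG : ‖gradient f x‖ ≤ G)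
    (hp : ⟪x + η • gradient f x - p, y - p⟫_ℝ ≤ 0) :
    4 * η * ((1 / 2) * f y - f x) ≤ ‖x - y‖ ^ 2 - ‖p - y‖ ^ 2 + η ^ 2 * G ^ 2 := by
  have hstep := two_mul_inner_le_of_projected_step hp
  have hG2 : ‖gradient f x‖ ^ 2 ≤ G ^ 2 := pow_le_pow_left₀ (norm_nonneg _) hG 2
  nlinarith [mul_le_mul_of_nonneg_left hDR (by positivity : (0 : ℝ) ≤ 4 * η),
    mul_le_mul_of_nonneg_left hG2 (sq_nonneg η)]

theorem sum_Icc_sub_eq_telescope {M : Type*} [AddCommGroup M] (a b : ℕ → M) (n : ℕ) :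
    ∑ t ∈ Icc 1 (n + 1), (a t - b t) = a 1 - b (n + 1) + ∑ t ∈ Icc 1 n, (a (t + 1) - b t) := by
  induction n with
  | zero => simp
  | succ n ih =>
    rw [sum_Icc_succ_top (by omega), ih, sum_Icc_succ_top (by omega)]
    abel

/-- Regret accounting for a potential `a t` that drops to `b t` within round `t` and is
carried over to `a (t + 1)` at a cost of `2 D δ t`. -/
theorem sum_le_of_round_bounds {n : ℕ} {r a b δ : ℕ → ℝ} {η D G : ℝ} (hη : 0 < η)
    (hr : ∀ t ∈ Icc 1 (n + 1), 4 * η * r t ≤ a t - b t + η ^ 2 * G ^ 2)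
    (hab : ∀ t ∈ Icc 1 n, a (t + 1) - b t ≤ 2 * D * δ t)
    (ha : a 1 ≤ D ^ 2) (hb : 0 ≤ b (n + 1)) :
    ∑ t ∈ Icc 1 (n + 1), r t ≤
      D ^ 2 / (4 * η) + D * (∑ t ∈ Icc 1 n, δ t) / (2 * η) + η * (n + 1 : ℕ) * G ^ 2 / 4 := by
  have hrounds : 4 * η * ∑ t ∈ Icc 1 (n + 1), r t ≤
      ∑ t ∈ Icc 1 (n + 1), (a t - b t) + (n + 1 : ℕ) * (η ^ 2 * G ^ 2) := by
    rw [mul_sum]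
    simpa [sum_add_distrib] using sum_le_sum hr
  have hcarry : ∑ t ∈ Icc 1 n, (a (t + 1) - b t) ≤ 2 * D * ∑ t ∈ Icc 1 n, δ t := by
    rw [mul_sum]
    exact sum_le_sum hab
  rw [sum_Icc_sub_eq_telescope] at hrounds
  rw [div_add_div _ _ (by positivity) (by positivity), div_add' _ _ _ (by positivity),
    le_div_iff₀ (by positivity)]
  nlinarith

theorem div_add_mul_div_eq_half_sqrt {A B η : ℝ} (hB : 0 < B) (hη : 0 < η)
    (hηA : η = √(A / B)) :
    A / (4 * η) + η * B / 4 = (1 / 2) * √(A * B) := by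
  have hAB : 0 < A / B := Real.sqrt_pos.mp (hηA ▸ hη)
  have hA : A = η ^ 2 * B := by rw [hηA, Real.sq_sqrt hAB.le, div_mul_cancel₀ _ hB.ne']
  rw [hA, show η ^ 2 * B * B = (η * B) ^ 2 by ring, Real.sqrt_sq (by positivity)]
  field_simp
  ring

theorem dynamic_regret_bound_general {d : ℕ} (T : ℕ) (hT : 1 ≤ T)
    (C : ℕ → Set (EuclideanSpace ℝ (Fin d)))
    (D G : ℝ)
    (hdiam : ∀ t ∈ Finset.Icc 1 T, ∀ s ∈ Finset.Icc 1 T,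
      ∀ u ∈ C t, ∀ v ∈ C s, ‖u - v‖ ≤ D)
    (f : ℕ → EuclideanSpace ℝ (Fin d) → ℝ)
    (hgrad : ∀ t ∈ Finset.Icc 1 T, ∀ x ∈ C t, ‖gradient (f t) x‖ ≤ G)
    (hDR : ∀ t ∈ Finset.Icc 1 T, ∀ x ∈ C t, ∀ y ∈ C t,
      (1 / 2) * f t y - f t x ≤ (1 / 2) * (inner ℝ (gradient (f t) x) (y - x) : ℝ))
    (xstar : ℕ → EuclideanSpace ℝ (Fin d))
    (hxstar : ∀ t ∈ Finset.Icc 1 T, xstar t ∈ C t)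
    (P : ℝ)
    (hP : P = ∑ t ∈ Finset.Icc 1 (T - 1), ‖xstar t - xstar (t + 1)‖)
    (η : ℝ) (hη : 0 < η)
    (x xbar : ℕ → EuclideanSpace ℝ (Fin d))
    (hx1 : x 1 ∈ C 1)
    (hproj1 : ∀ t ∈ Finset.Icc 1 T, xbar (t + 1) ∈ C t ∧
      ∀ y ∈ C t,
        (inner ℝ (x t + η • gradient (f t) (x t) - xbar (t + 1)) (y - xbar (t + 1)) : ℝ) ≤ 0)
    (hproj2 : ∀ t ∈ Finset.Icc 1 (T - 1), x (t + 1) ∈ C (t + 1) ∧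
      ∀ y ∈ C (t + 1),
        (inner ℝ (xbar (t + 1) - x (t + 1)) (y - x (t + 1)) : ℝ) ≤ 0) :
    (∑ t ∈ Finset.Icc 1 T, ((1 / 2) * f t (xstar t) - f t (x t)) ≤
        D ^ 2 / (4 * η) + D * P / (2 * η) + η * T * G ^ 2 / 4) ∧
    (0 < G → η = Real.sqrt (D * (D + 2 * P) / (T * G ^ 2)) →
      ∑ t ∈ Finset.Icc 1 T, ((1 / 2) * f t (xstar t) - f t (x t)) ≤
        (1 / 2) * Real.sqrt (D * (D + 2 * P) * T * G ^ 2)) := by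
  obtain ⟨n, rfl⟩ : ∃ n, T = n + 1 := ⟨T - 1, by omega⟩
  rw [Nat.add_sub_cancel] at hP hproj2
  have hx : ∀ t ∈ Icc 1 (n + 1), x t ∈ C t := by
    rintro (_ | _ | t) ht
    · simp at ht
    · exact hx1
    · exact (hproj2 (t + 1) (by simp only [mem_Icc] at ht ⊢; omega)).1
  have hround : ∀ t ∈ Icc 1 (n + 1), 4 * η * ((1 / 2) * f t (xstar t) - f t (x t)) ≤
      ‖x t - xstar t‖ ^ 2 - ‖xbar (t + 1) - xstar t‖ ^ 2 + η ^ 2 * G ^ 2 := fun t ht ↦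
    four_mul_dr_regret_le_of_projected_step hη.le (hDR t ht _ (hx t ht) _ (hxstar t ht))
      (hgrad t ht _ (hx t ht)) ((hproj1 t ht).2 _ (hxstar t ht))
  have hcarry : ∀ t ∈ Icc 1 n, ‖x (t + 1) - xstar (t + 1)‖ ^ 2 - ‖xbar (t + 1) - xstar t‖ ^ 2 ≤
      2 * D * ‖xstar t - xstar (t + 1)‖ := by
    intro t ht
    have ht₀ : t ∈ Icc 1 (n + 1) := by simp only [mem_Icc] at ht ⊢; omega
    have ht₁ : t + 1 ∈ Icc 1 (n + 1) := by simp only [mem_Icc] at ht ⊢; omega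
    exact sq_norm_sub_sub_sq_norm_sub_le
      (norm_sub_le_of_inner_sub_nonpos ((hproj2 t ht).2 _ (hxstar _ ht₁)))
      (hdiam _ ht₁ _ ht₁ _ (hx _ ht₁) _ (hxstar _ ht₁))
      (hdiam _ ht₀ _ ht₀ _ (hproj1 t ht₀).1 _ (hxstar _ ht₀))
  have h1 : 1 ∈ Icc 1 (n + 1) := by simp
  have hstart : ‖x 1 - xstar 1‖ ^ 2 ≤ D ^ 2 :=
    pow_le_pow_left₀ (norm_nonneg _) (hdiam 1 h1 1 h1 _ hx1 _ (hxstar 1 h1)) 2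
  have hregret := sum_le_of_round_bounds hη hround hcarry hstart (sq_nonneg _)
  rw [← hP] at hregret
  refine ⟨hregret, fun hG hηeq ↦ hregret.trans_eq ?_⟩
  rw [mul_assoc (D * (D + 2 * P)), ← div_add_mul_div_eq_half_sqrt (by positivity) hη hηeq]
  ring

/-- dynamic regret bound for two-step projected gradient ascent over
time-varying feasible sets `C_t`, with path length `P` of the comparators:
`Σ_t [(1/2)f_t(x_t*) − f_t(x_t)] ≤ D²/(4η) + D·P/(2η) + η·T·G²/4`, and with the
optimized step size `η = √(D(D+2P)/(T G²))` the regret is at most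
`(1/2)·√(D(D+2P)·T·G²)`. -/
theorem dynamic_regret_bound {d : ℕ} (T : ℕ) (hT : 1 ≤ T)
    (C : ℕ → Set (EuclideanSpace ℝ (Fin d)))
    (hC : ∀ t ∈ Finset.Icc 1 T,
      (C t).Nonempty ∧ IsClosed (C t) ∧ Convex ℝ (C t))
    (D G : ℝ)
    (hdiam : ∀ t ∈ Finset.Icc 1 T, ∀ s ∈ Finset.Icc 1 T,
      ∀ u ∈ C t, ∀ v ∈ C s, ‖u - v‖ ≤ D)
    (f : ℕ → EuclideanSpace ℝ (Fin d) → ℝ)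
    (hf : ∀ t ∈ Finset.Icc 1 T, Differentiable ℝ (f t))
    (hgrad : ∀ t ∈ Finset.Icc 1 T, ∀ x ∈ C t, ‖gradient (f t) x‖ ≤ G)
    (hDR : ∀ t ∈ Finset.Icc 1 T, ∀ x ∈ C t, ∀ y ∈ C t,
      (1 / 2) * f t y - f t x ≤ (1 / 2) * (inner ℝ (gradient (f t) x) (y - x) : ℝ))
    (xstar : ℕ → EuclideanSpace ℝ (Fin d))
    (hxstar : ∀ t ∈ Finset.Icc 1 T, xstar t ∈ C t)
    (P : ℝ)
    (hP : P = ∑ t ∈ Finset.Icc 1 (T - 1), ‖xstar t - xstar (t + 1)‖)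
    (η : ℝ) (hη : 0 < η)
    (x xbar : ℕ → EuclideanSpace ℝ (Fin d))
    (hx1 : x 1 ∈ C 1)
    (hproj1 : ∀ t ∈ Finset.Icc 1 T, xbar (t + 1) ∈ C t ∧
      ∀ y ∈ C t,
        (inner ℝ (x t + η • gradient (f t) (x t) - xbar (t + 1)) (y - xbar (t + 1)) : ℝ) ≤ 0)
    (hproj2 : ∀ t ∈ Finset.Icc 1 (T - 1), x (t + 1) ∈ C (t + 1) ∧
      ∀ y ∈ C (t + 1),
        (inner ℝ (xbar (t + 1) - x (t + 1)) (y - x (t + 1)) : ℝ) ≤ 0) :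
    (∑ t ∈ Finset.Icc 1 T, ((1 / 2) * f t (xstar t) - f t (x t)) ≤
        D ^ 2 / (4 * η) + D * P / (2 * η) + η * T * G ^ 2 / 4) ∧
    (0 < G → η = Real.sqrt (D * (D + 2 * P) / (T * G ^ 2)) →
      ∑ t ∈ Finset.Icc 1 T, ((1 / 2) * f t (xstar t) - f t (x t)) ≤
        (1 / 2) * Real.sqrt (D * (D + 2 * P) * T * G ^ 2)) :=
  dynamic_regret_bound_general T hT C D G hdiam f hgrad hDR xstar hxstar P hP η hη x xbar hx1 hproj1
    hproj2
end
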